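/- Let R be a commutative Noetherian ring and A an Artinian R-module. Then Supp_R A = Ass_R A and this set is a finite set of maximal ideals of R. Moreover, if Supp_R A = {m_1, …, m_t}, then the natural R-homomorphism ψ : A → ⊕_{i=1}^t A_{m_i} (whose i-th component is the localization map) is an isomorphism, and Att_R A = ⋃_{i=1}^t Att_R (A_{m_i}). -/

import Mathlib

/- Common definitions: local cohomology modules, cohomological dimension, module dimension,
secondary representations and attached primes. -/

open CategoryTheory TensorProduct

/-- The `i`-th local cohomology module `H^i_a(M)`, as a type with its `R`-module structure. -/
noncomputable def TopLC (R : Type) [CommRing R] (a : Ideal R) (i : ℕ)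
    (M : Type) [AddCommGroup M] [Module R M] : Type :=
  ((localCohomology a i).obj (ModuleCat.of R M))

noncomputable instance (R : Type) [CommRing R] (a : Ideal R) (i : ℕ)
    (M : Type) [AddCommGroup M] [Module R M] : AddCommGroup (TopLC R a i M) :=
  inferInstanceAs (AddCommGroup ((localCohomology a i).obj (ModuleCat.of R M)))

noncomputable instance (R : Type) [CommRing R] (a : Ideal R) (i : ℕ)
    (M : Type) [AddCommGroup M] [Module R M] : Module R (TopLC R a i M) :=
  inferInstanceAs (Module R ((localCohomology a i).obj (ModuleCat.of R M)))

/-- The cohomological dimension `cd_R(a, M) = sup { i | H^i_a(M) ≠ 0 }`,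
with value `⊥` if all local cohomology modules vanish. -/
noncomputable def cohDim (R : Type) [CommRing R] (a : Ideal R)
    (M : Type) [AddCommGroup M] [Module R M] : WithBot ℕ∞ :=
  sSup {n : WithBot ℕ∞ | ∃ i : ℕ, n = (i : ℕ) ∧ Nontrivial (TopLC R a i M)}

/-- The (Krull) dimension of a module, i.e. the Krull dimension of its support. -/
noncomputable def moduleDim (R : Type) [CommRing R]
    (M : Type) [AddCommGroup M] [Module R M] : WithBot ℕ∞ :=
  Order.krullDim (Module.support R M)

/-- `Assh_R M`: the associated primes `p` of `M` with `dim R/p = dim M`. -/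
noncomputable def Assh (R : Type) [CommRing R]
    (M : Type) [AddCommGroup M] [Module R M] : Set (Ideal R) :=
  { p | p ∈ associatedPrimes R M ∧ ringKrullDim (R ⧸ p) = moduleDim R M }

/-- A submodule `S` is secondary if `S ≠ 0` and every `r : R` acts on `S` either
surjectively or nilpotently. -/
def IsSecondarySub (R : Type) [CommRing R] {M : Type} [AddCommGroup M] [Module R M]
    (S : Submodule R M) : Prop :=
  S ≠ ⊥ ∧ ∀ r : R, (∀ m ∈ S, ∃ s ∈ S, r • s = m) ∨ (∃ n : ℕ, ∀ m ∈ S, r ^ n • m = 0)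

/-- A module is representable if it is the (finite) sum of secondary submodules. -/
def IsRepresentable (R : Type) [CommRing R] (M : Type) [AddCommGroup M] [Module R M] : Prop :=
  ∃ (n : ℕ) (S : Fin n → Submodule R M), (∀ i, IsSecondarySub R (S i)) ∧ (⨆ i, S i) = ⊤

/-- A minimal secondary representation: secondary submodules summing to the whole module,
with pairwise distinct attached primes, none contained in the sum of the others. -/
def IsMinimalRep (R : Type) [CommRing R] {M : Type} [AddCommGroup M] [Module R M]
    {n : ℕ} (S : Fin n → Submodule R M) : Prop :=
  (∀ i, IsSecondarySub R (S i)) ∧ (⨆ i, S i) = ⊤ ∧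
    (Function.Injective fun i => (S i).annihilator.radical) ∧
    ∀ j, ¬ (S j ≤ ⨆ i ∈ ({j}ᶜ : Set (Fin n)), S i)

/-- The attached primes of a module: the radicals of the annihilators of the terms of a
minimal secondary representation. -/
def AttachedPrimes (R : Type) [CommRing R] (M : Type) [AddCommGroup M] [Module R M] :
    Set (Ideal R) :=
  { p | ∃ (n : ℕ) (S : Fin n → Submodule R M), IsMinimalRep R S ∧
      ∃ i, p = (S i).annihilator.radical }

/-- `stab b N = ⟨b⟩N = ⋂ₙ bⁿN`. -/
def stab {R M : Type} [CommRing R] [AddCommGroup M] [Module R M]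
    (b : Ideal R) (N : Submodule R M) : Submodule R M :=
  ⨅ n : ℕ, b ^ n • N

section Sec
variable {R M N : Type} [CommRing R] [AddCommGroup M] [Module R M]
  [AddCommGroup N] [Module R N]

lemma surjOn_pow {S : Submodule R M} {r : R}
    (h : ∀ m ∈ S, ∃ s ∈ S, r • s = m) (n : ℕ) : ∀ m ∈ S, ∃ s ∈ S, r ^ n • s = m := by
  induction n with
  | zero => exact fun m hm => ⟨m, hm, by simp⟩
  | succ k ih =>
    intro m hm
    obtain ⟨s, hs, hrs⟩ := h m hm
    obtain ⟨u, hu, hru⟩ := ih s hs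
    exact ⟨u, hu, by rw [pow_succ, mul_comm, mul_smul, hru, hrs]⟩

lemma mem_radical_ann_iff {S : Submodule R M} {r : R} :
    r ∈ S.annihilator.radical ↔ ∃ n : ℕ, ∀ m ∈ S, r ^ n • m = 0 := by
  simp only [Ideal.mem_radical_iff, Submodule.mem_annihilator]

lemma IsSecondarySub.radical_prime {S : Submodule R M} (hS : IsSecondarySub R S) :
    S.annihilator.radical.IsPrime := by
  constructor
  · intro h
    have h1 : (1 : R) ∈ S.annihilator.radical := h ▸ Submodule.mem_top
    obtain ⟨n, hn⟩ := mem_radical_ann_iff.mp h1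
    refine hS.1 ((Submodule.eq_bot_iff _).mpr fun m hm => ?_)
    simpa using hn m hm
  · intro x y hxy
    by_contra hcon
    push_neg at hcon
    obtain ⟨hx, hy⟩ := hcon
    obtain ⟨n, hn⟩ := mem_radical_ann_iff.mp hxy
    -- x, y not in radical, so both act surjectively
    have hxs : ∀ m ∈ S, ∃ s ∈ S, x • s = m := by
      rcases hS.2 x with h | h
      · exact h
      · exact absurd (mem_radical_ann_iff.mpr h) hx
    have hys : ∀ m ∈ S, ∃ s ∈ S, y • s = m := by
      rcases hS.2 y with h | h
      · exact h
      · exact absurd (mem_radical_ann_iff.mpr h) hy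
    have hxys : ∀ m ∈ S, ∃ s ∈ S, (x * y) • s = m := by
      intro m hm
      obtain ⟨s, hs, hxsm⟩ := hxs m hm
      obtain ⟨u, hu, hysu⟩ := hys s hs
      exact ⟨u, hu, by rw [mul_smul, hysu, hxsm]⟩
    refine hS.1 ((Submodule.eq_bot_iff _).mpr fun m hm => ?_)
    obtain ⟨s, hs, hsm⟩ := surjOn_pow hxys n m hm
    rw [← hsm, hn s hs]

lemma annihilator_sup {S T : Submodule R M} :
    (S ⊔ T).annihilator = S.annihilator ⊓ T.annihilator := by
  apply le_antisymm
  · exact le_inf (Submodule.annihilator_mono le_sup_left)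
      (Submodule.annihilator_mono le_sup_right)
  · intro r hr
    rw [Submodule.mem_annihilator]
    intro n hn
    obtain ⟨s, hs, t, ht, rfl⟩ := Submodule.mem_sup.mp hn
    rw [smul_add, Submodule.mem_annihilator.mp hr.1 s hs,
      Submodule.mem_annihilator.mp hr.2 t ht, add_zero]

lemma IsSecondarySub.sup {S T : Submodule R M} (hS : IsSecondarySub R S)
    (hT : IsSecondarySub R T)
    (hrad : S.annihilator.radical = T.annihilator.radical) :
    IsSecondarySub R (S ⊔ T) ∧ (S ⊔ T).annihilator.radical = S.annihilator.radical := by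
  constructor
  · constructor
    · intro h
      exact hS.1 (le_bot_iff.mp (le_trans le_sup_left h.le))
    · intro r
      by_cases hr : r ∈ S.annihilator.radical
      · right
        obtain ⟨n, hn⟩ := mem_radical_ann_iff.mp hr
        obtain ⟨k, hk⟩ := mem_radical_ann_iff.mp (hrad ▸ hr)
        refine ⟨n + k, fun m hm => ?_⟩
        obtain ⟨s, hs, t, ht, rfl⟩ := Submodule.mem_sup.mp hm
        have h1 : r ^ (n + k) • s = 0 := by
          rw [pow_add, mul_comm, mul_smul, hn s hs, smul_zero]
        have h2 : r ^ (n + k) • t = 0 := by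
          rw [pow_add, mul_smul, hk t ht, smul_zero]
        rw [smul_add, h1, h2, add_zero]
      · left
        have hSs : ∀ m ∈ S, ∃ s ∈ S, r • s = m := by
          rcases hS.2 r with h | h
          · exact h
          · exact absurd (mem_radical_ann_iff.mpr h) hr
        have hTs : ∀ m ∈ T, ∃ s ∈ T, r • s = m := by
          rcases hT.2 r with h | h
          · exact h
          · exact absurd (mem_radical_ann_iff.mpr h) (hrad ▸ hr)
        intro m hm
        obtain ⟨s, hs, t, ht, rfl⟩ := Submodule.mem_sup.mp hm
        obtain ⟨s', hs', hs'e⟩ := hSs s hs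
        obtain ⟨t', ht', ht'e⟩ := hTs t ht
        exact ⟨s' + t', Submodule.add_mem_sup hs' ht', by rw [smul_add, hs'e, ht'e]⟩
  · rw [annihilator_sup, Ideal.radical_inf, hrad, inf_idem]

lemma IsSecondarySub.map (f : M →ₗ[R] N) {S : Submodule R M} (hS : IsSecondarySub R S)
    (hne : S.map f ≠ ⊥) :
    IsSecondarySub R (S.map f) ∧ (S.map f).annihilator.radical = S.annihilator.radical := by
  have hdi : ∀ r : R, (∀ m ∈ S.map f, ∃ s ∈ S.map f, r • s = m) ∨
      (∃ n : ℕ, ∀ m ∈ S.map f, r ^ n • m = 0) := by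
    intro r
    rcases hS.2 r with h | h
    · left
      rintro m ⟨x, hx, rfl⟩
      obtain ⟨s, hs, hse⟩ := h x hx
      exact ⟨f s, ⟨s, hs, rfl⟩, by rw [← map_smul, hse]⟩
    · right
      obtain ⟨n, hn⟩ := h
      refine ⟨n, ?_⟩
      rintro m ⟨x, hx, rfl⟩
      rw [← map_smul, hn x hx, map_zero]
  refine ⟨⟨hne, hdi⟩, ?_⟩
  apply le_antisymm
  · intro r hr
    by_contra hrS
    have hsurj : ∀ m ∈ S, ∃ s ∈ S, r • s = m := by
      rcases hS.2 r with h | h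
      · exact h
      · exact absurd (mem_radical_ann_iff.mpr h) hrS
    obtain ⟨n, hn⟩ := mem_radical_ann_iff.mp hr
    refine hne ((Submodule.eq_bot_iff _).mpr ?_)
    rintro m ⟨x, hx, rfl⟩
    obtain ⟨s, hs, hse⟩ := surjOn_pow hsurj n x hx
    rw [← hse, map_smul, hn (f s) ⟨s, hs, rfl⟩]
  · intro r hr
    obtain ⟨n, hn⟩ := mem_radical_ann_iff.mp hr
    refine mem_radical_ann_iff.mpr ⟨n, ?_⟩
    rintro m ⟨x, hx, rfl⟩
    rw [← map_smul, hn x hx, map_zero]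

end Sec

section Rep
variable {R M : Type} [CommRing R] [AddCommGroup M] [Module R M]

/-- every Artinian module has a secondary representation (as a Finset of submodules). -/
lemma exists_rep [IsArtinian R M] (N : Submodule R M) :
    ∃ s : Finset (Submodule R M), (∀ T ∈ s, IsSecondarySub R T) ∧ s.sup id = N := by
  induction N using IsArtinian.induction with
  | _ N ih =>
  classical
  by_cases hbot : N = ⊥
  · exact ⟨∅, by simp, by simp [hbot]⟩
  by_cases hsec : IsSecondarySub R N
  · exact ⟨{N}, by simpa using hsec, by simp⟩
  -- N not secondary: find r neither surjective nor nilpotent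
  have : ∃ r : R, ¬ (∀ m ∈ N, ∃ s ∈ N, r • s = m) ∧ ¬ (∃ n : ℕ, ∀ m ∈ N, r ^ n • m = 0) := by
    by_contra h
    refine hsec ⟨hbot, fun r => ?_⟩
    by_cases hA : ∀ m ∈ N, ∃ s ∈ N, r • s = m
    · exact Or.inl hA
    · by_cases hB : ∃ n : ℕ, ∀ m ∈ N, r ^ n • m = 0
      · exact Or.inr hB
      · exact absurd ⟨r, hA, hB⟩ h
  obtain ⟨r, hnsurj, hnnilp⟩ := this
  -- the descending chain N ⊇ rN ⊇ r²N ⋯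
  set D : ℕ → Submodule R M := fun k => N.map (LinearMap.lsmul R M (r ^ k)) with hD
  have hDmono : ∀ j k, j ≤ k → D k ≤ D j := by
    intro j k hjk
    rintro x ⟨y, hy, rfl⟩
    refine ⟨r ^ (k - j) • y, N.smul_mem _ hy, ?_⟩
    simp only [LinearMap.lsmul_apply, ← mul_smul, ← pow_add]
    congr 2
    omega
  obtain ⟨k, hk⟩ := IsArtinian.monotone_stabilizes
    (⟨fun n => OrderDual.toDual (D n), fun a b hab => hDmono a b hab⟩ : ℕ →o (Submodule R M)ᵒᵈ)
  have hkk : D k = D (2 * k) := OrderDual.toDual.injective (hk (2 * k) (by omega))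
  by_cases hk0 : k = 0
  · -- D 0 = N; then all D equal; r • N = N, contradiction with hnsurj
    exfalso
    apply hnsurj
    intro m hm
    have h01 : D 0 = D 1 := OrderDual.toDual.injective (by
      have := hk 1 (by omega); rwa [hk0] at this)
    have hmem : m ∈ D 1 := by
      have : m ∈ D 0 := ⟨m, hm, by simp⟩
      rwa [h01] at this
    obtain ⟨y, hy, rfl⟩ := hmem
    exact ⟨y, hy, by simp⟩
  -- K = ker(r^k) ⊓ N, I = r^k N, N = K ⊔ I, both proper
  set K : Submodule R M := N ⊓ LinearMap.ker (LinearMap.lsmul R M (r ^ k)) with hK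
  have hsplit : N = K ⊔ D k := by
    apply le_antisymm
    · intro x hx
      have hx' : (r ^ k) • x ∈ D (2 * k) := by
        rw [← hkk]
        exact ⟨x, hx, rfl⟩
      obtain ⟨y, hy, hye⟩ := hx'
      simp only [LinearMap.lsmul_apply] at hye
      have hye' : (r ^ (2 * k)) • y = (r ^ k) • x := by simpa using hye
      refine Submodule.mem_sup.mpr ⟨x - r ^ k • y, ?_, r ^ k • y, ⟨y, hy, rfl⟩, by abel⟩
      refine ⟨N.sub_mem hx (N.smul_mem _ hy), ?_⟩
      show x - r ^ k • y ∈ LinearMap.ker (LinearMap.lsmul R M (r ^ k))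
      rw [LinearMap.mem_ker, LinearMap.lsmul_apply, smul_sub, ← mul_smul, ← pow_add,
        show k + k = 2 * k by omega, hye', sub_self]
    · refine sup_le inf_le_left ?_
      rintro x ⟨y, hy, rfl⟩
      exact N.smul_mem _ hy
  have hKlt : K < N := by
    refine lt_of_le_of_ne inf_le_left fun h => ?_
    apply hnnilp
    refine ⟨k, fun m hm => ?_⟩
    have : m ∈ K := h ▸ hm
    simpa using this.2
  have hIlt : D k < N := by
    refine lt_of_le_of_ne (fun x hx => ?_) fun h => ?_
    · obtain ⟨y, hy, rfl⟩ := hx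
      exact N.smul_mem _ hy
    · apply hnsurj
      intro m hm
      have : m ∈ D k := h ▸ hm
      obtain ⟨y, hy, rfl⟩ := this
      have hk1 : (r ^ k : R) = r * r ^ (k - 1) := by
        rw [← pow_succ']
        congr 1
        omega
      exact ⟨r ^ (k - 1) • y, N.smul_mem _ hy, by
        simp only [LinearMap.lsmul_apply, ← mul_smul, ← hk1]⟩
  obtain ⟨s1, hs1, hs1e⟩ := ih K hKlt
  obtain ⟨s2, hs2, hs2e⟩ := ih (D k) hIlt
  refine ⟨s1 ∪ s2, fun T hT => ?_, ?_⟩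
  · rcases Finset.mem_union.mp hT with h | h
    · exact hs1 T h
    · exact hs2 T h
  · rw [Finset.sup_union, hs1e, hs2e, ← hsplit]

/-- Artinian modules have minimal secondary representations. -/
lemma exists_minimalRep [IsArtinian R M] :
    ∃ (n : ℕ) (S : Fin n → Submodule R M), IsMinimalRep R S := by
  classical
  have hex : ∃ n : ℕ, ∃ s : Finset (Submodule R M),
      ((∀ T ∈ s, IsSecondarySub R T) ∧ s.sup id = ⊤) ∧ s.card = n := by
    obtain ⟨s, h1, h2⟩ := exists_rep (⊤ : Submodule R M)
    exact ⟨s.card, s, ⟨h1, h2⟩, rfl⟩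
  obtain ⟨s, ⟨hsec, hsup⟩, hcard⟩ := Nat.find_spec hex
  have hmin : ∀ s' : Finset (Submodule R M), (∀ T ∈ s', IsSecondarySub R T) →
      s'.sup id = ⊤ → s.card ≤ s'.card := by
    intro s' h1 h2
    rw [hcard]
    exact Nat.find_min' hex ⟨s', ⟨h1, h2⟩, rfl⟩
  -- (a) distinct elements have distinct radicals
  have hrada : ∀ T1 ∈ s, ∀ T2 ∈ s, T1 ≠ T2 →
      T1.annihilator.radical ≠ T2.annihilator.radical := by
    intro T1 h1 T2 h2 hne heq
    set s' : Finset (Submodule R M) := insert (T1 ⊔ T2) ((s.erase T1).erase T2) with hs'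
    have hT2e : T2 ∈ s.erase T1 := Finset.mem_erase.mpr ⟨Ne.symm hne, h2⟩
    have hsupdec : s.sup id = T1 ⊔ (T2 ⊔ ((s.erase T1).erase T2).sup id) := by
      conv_lhs => rw [← Finset.insert_erase h1, Finset.sup_insert,
        ← Finset.insert_erase hT2e, Finset.sup_insert]
      rfl
    have hsup' : s'.sup id = ⊤ := by
      rw [hs', Finset.sup_insert, ← hsup, hsupdec]
      simp only [id_eq]
      rw [← sup_assoc]
    have hsec' : ∀ T ∈ s', IsSecondarySub R T := by
      intro T hT
      rcases Finset.mem_insert.mp hT with h | h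
      · exact h ▸ ((hsec T1 h1).sup (hsec T2 h2) heq).1
      · exact hsec T (Finset.mem_of_mem_erase (Finset.mem_of_mem_erase h))
    have hc : s'.card < s.card := by
      have h2e : ((s.erase T1).erase T2).card = s.card - 2 := by
        rw [Finset.card_erase_of_mem hT2e, Finset.card_erase_of_mem h1]
        omega
      have hge2 : 2 ≤ s.card := by
        have h1e := Finset.card_erase_of_mem h1
        have h1c : 1 ≤ (s.erase T1).card := Finset.card_pos.mpr ⟨T2, hT2e⟩
        omega
      have hcardle : s'.card ≤ ((s.erase T1).erase T2).card + 1 :=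
        Finset.card_insert_le _ _
      omega
    exact absurd (hmin s' hsec' hsup') (by omega)
  -- (b) no element is redundant
  have hred : ∀ T ∈ s, ¬ T ≤ (s.erase T).sup id := by
    intro T hT hle
    have hsup' : (s.erase T).sup id = ⊤ := by
      rw [← top_le_iff, ← hsup]
      conv_lhs => rw [← Finset.insert_erase hT, Finset.sup_insert]
      exact sup_le hle le_rfl
    have := hmin (s.erase T) (fun T' hT' => hsec T' (Finset.mem_of_mem_erase hT')) hsup'
    rw [Finset.card_erase_of_mem hT] at this
    have h1c : 1 ≤ s.card := Finset.card_pos.mpr ⟨T, hT⟩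
    omega
  -- now convert to a Fin-indexed family
  refine ⟨s.card, fun i => (s.equivFin.symm i : Submodule R M), ?_, ?_, ?_, ?_⟩
  · exact fun i => hsec _ (s.equivFin.symm i).2
  · apply le_antisymm le_top
    rw [← hsup]
    refine Finset.sup_le fun T hT => ?_
    refine le_iSup_of_le (s.equivFin ⟨T, hT⟩) ?_
    simp
  · intro i j hij
    by_cases h : (s.equivFin.symm i : Submodule R M) = (s.equivFin.symm j : Submodule R M)
    · have : s.equivFin.symm i = s.equivFin.symm j := Subtype.ext h
      exact s.equivFin.symm.injective this
    · exact absurd hij (hrada _ (s.equivFin.symm i).2 _ (s.equivFin.symm j).2 h)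
  · intro j hle
    refine hred _ (s.equivFin.symm j).2 (le_trans hle ?_)
    refine iSup_le fun i => iSup_le fun hi => ?_
    have hne : (s.equivFin.symm i : Submodule R M) ≠ (s.equivFin.symm j : Submodule R M) := by
      intro h
      exact hi (s.equivFin.symm.injective (Subtype.ext h))
    exact Finset.le_sup (f := id) (Finset.mem_erase.mpr ⟨hne, (s.equivFin.symm i).2⟩)

end Rep


section QSet
variable {R : Type} [CommRing R]

/-- the set of primes `p` such that `M` has a `p`-secondary quotient. -/
def QSet (R : Type) [CommRing R] (M : Type) [AddCommGroup M] [Module R M] : Set (Ideal R) :=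
  { p | ∃ K : Submodule R M, IsSecondarySub R (⊤ : Submodule R (M ⧸ K)) ∧
      (⊤ : Submodule R (M ⧸ K)).annihilator.radical = p }

variable {M N : Type} [AddCommGroup M] [Module R M] [AddCommGroup N] [Module R N]

lemma sec_top_congr (e : M ≃ₗ[R] N) (h : IsSecondarySub R (⊤ : Submodule R M)) :
    IsSecondarySub R (⊤ : Submodule R N) ∧
      (⊤ : Submodule R N).annihilator.radical =
        (⊤ : Submodule R M).annihilator.radical := by
  have hmap : (⊤ : Submodule R M).map (e : M →ₗ[R] N) = ⊤ := by
    rw [Submodule.map_top, LinearMap.range_eq_top]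
    exact e.surjective
  have hne : (⊤ : Submodule R M).map (e : M →ₗ[R] N) ≠ ⊥ := by
    rw [hmap]
    intro htop
    apply h.1
    rw [eq_bot_iff]
    intro x _
    have : e x ∈ (⊥ : Submodule R N) := htop ▸ Submodule.mem_top
    rw [Submodule.mem_bot] at this ⊢
    exact e.map_eq_zero_iff.mp this
  obtain ⟨h1, h2⟩ := h.map (e : M →ₗ[R] N) hne
  rw [hmap] at h1 h2
  exact ⟨h1, h2⟩

lemma QSet_subset_of_surjective (g : N →ₗ[R] M) (hg : Function.Surjective g) :
    QSet R M ⊆ QSet R N := by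
  rintro p ⟨K, hsec, hrad⟩
  have hsurj : Function.Surjective (K.mkQ.comp g) :=
    (Submodule.mkQ_surjective K).comp hg
  set f := K.mkQ.comp g with hf
  let e := f.quotKerEquivOfSurjective hsurj
  obtain ⟨h1, h2⟩ := sec_top_congr e.symm hsec
  exact ⟨LinearMap.ker f, h1, by rw [h2, hrad]⟩

lemma minimalRep_radical_mem_QSet {n : ℕ} {S : Fin n → Submodule R M}
    (hS : IsMinimalRep R S) (i : Fin n) :
    (S i).annihilator.radical ∈ QSet R M := by
  set K : Submodule R M := ⨆ j ∈ ({i}ᶜ : Set (Fin n)), S j with hK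
  refine ⟨K, ?_⟩
  have hmapK : K.map K.mkQ = ⊥ := by
    rw [eq_bot_iff]
    rintro x ⟨y, hy, rfl⟩
    rw [Submodule.mem_bot, Submodule.mkQ_apply, Submodule.Quotient.mk_eq_zero]
    exact hy
  have hsplit : (⊤ : Submodule R M) = S i ⊔ K := by
    rw [← hS.2.1]
    apply le_antisymm
    · refine iSup_le fun j => ?_
      by_cases h : j = i
      · exact h ▸ le_sup_left
      · exact le_trans (le_iSup₂ (f := fun j (_ : j ∈ ({i}ᶜ : Set (Fin n))) => S j) j h)
          le_sup_right
    · refine sup_le (le_iSup S i) (iSup_le fun j => iSup_le fun _ => le_iSup S j)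
  have htop : (⊤ : Submodule R (M ⧸ K)) = (S i).map K.mkQ := by
    have : (⊤ : Submodule R (M ⧸ K)) = (⊤ : Submodule R M).map K.mkQ := by
      rw [Submodule.map_top, Submodule.range_mkQ]
    rw [this, hsplit, Submodule.map_sup, hmapK, sup_bot_eq]
  have hne : (S i).map K.mkQ ≠ ⊥ := by
    intro h
    refine hS.2.2.2 i fun x hx => ?_
    have : K.mkQ x ∈ (⊥ : Submodule R (M ⧸ K)) := h ▸ ⟨x, hx, rfl⟩
    rw [Submodule.mem_bot, Submodule.mkQ_apply, Submodule.Quotient.mk_eq_zero] at this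
    exact this
  obtain ⟨h1, h2⟩ := (hS.1 i).map K.mkQ hne
  rw [← htop] at h1 h2
  exact ⟨h1, h2⟩

lemma prime_pigeonhole {ι : Type} [Fintype ι] {B : Type} [AddCommGroup B] [Module R B]
    (U : ι → Submodule R B) (hsup : ⨆ i, U i = ⊤) {p : Ideal R} (hp : p.IsPrime)
    (hrad : (⊤ : Submodule R B).annihilator.radical = p) :
    ∃ i, (U i).annihilator.radical = p := by
  classical
  by_contra hcon
  push_neg at hcon
  have hle : ∀ i, p ≤ (U i).annihilator.radical := fun i =>
    hrad ▸ Ideal.radical_mono (Submodule.annihilator_mono le_top)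
  have hx : ∀ i, ∃ x, x ∈ (U i).annihilator.radical ∧ x ∉ p := by
    intro i
    by_contra h
    push_neg at h
    exact hcon i (le_antisymm (fun x hxm => h x hxm) (hle i))
  choose x hx1 hx2 using hx
  choose nn hnn using fun i => Ideal.mem_radical_iff.mp (hx1 i)
  set N : ℕ := Finset.univ.sum nn with hN
  have hpow : ∀ i, x i ^ N ∈ (U i).annihilator := by
    intro i
    have hle' : nn i ≤ N := Finset.single_le_sum (fun _ _ => Nat.zero_le _)
      (Finset.mem_univ i)
    rw [show N = (N - nn i) + nn i by omega, pow_add]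
    exact Ideal.mul_mem_left _ _ (hnn i)
  have hprodmem : ∀ i, (Finset.univ.prod fun j => x j ^ N) ∈ (U i).annihilator := by
    intro i
    rw [← Finset.mul_prod_erase Finset.univ _ (Finset.mem_univ i)]
    exact Ideal.mul_mem_right _ _ (hpow i)
  have hkill : (Finset.univ.prod x) ^ N ∈ (⊤ : Submodule R B).annihilator := by
    rw [Submodule.mem_annihilator]
    intro b _
    have hb : b ∈ ⨆ i, U i := hsup ▸ Submodule.mem_top
    rw [← Finset.prod_pow]
    refine Submodule.iSup_induction (motive := fun b => (Finset.univ.prod fun j => x j ^ N) • b = 0) U hb ?_ ?_ ?_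
    · intro i y hy
      exact Submodule.mem_annihilator.mp (hprodmem i) y hy
    · exact smul_zero _
    · intro y z hy hz
      rw [smul_add, hy, hz, add_zero]
  have hmem : Finset.univ.prod x ∈ p := by
    rw [← hrad]
    exact Ideal.mem_radical_iff.mpr ⟨N, hkill⟩
  haveI := hp
  obtain ⟨i, _, hip⟩ := Ideal.IsPrime.prod_mem_iff.mp hmem
  exact hx2 i hip

theorem attachedPrimes_eq_QSet [IsArtinian R M] : AttachedPrimes R M = QSet R M := by
  apply Set.Subset.antisymm
  · rintro p ⟨n, S, hS, i, rfl⟩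
    exact minimalRep_radical_mem_QSet hS i
  · rintro p ⟨K, hsec, hrad⟩
    have hp : p.IsPrime := hrad ▸ hsec.radical_prime
    obtain ⟨n, S, hS⟩ := exists_minimalRep (R := R) (M := M)
    have hsup : ⨆ i, (S i).map K.mkQ = ⊤ := by
      rw [← Submodule.map_iSup, hS.2.1, Submodule.map_top, Submodule.range_mkQ]
    obtain ⟨i, hi⟩ := prime_pigeonhole _ hsup hp hrad
    have hne : (S i).map K.mkQ ≠ ⊥ := by
      intro h
      rw [h, Submodule.annihilator_bot, Ideal.radical_top] at hi
      exact hp.ne_top hi.symm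
    obtain ⟨_, h2⟩ := (hS.1 i).map K.mkQ hne
    exact ⟨n, S, hS, i, by rw [← h2, hi]⟩

end QSet


section Decomp

lemma exists_sum_of_iSup_eq_top {R M : Type} [CommRing R] [AddCommGroup M] [Module R M]
    {t : ℕ} (I : Fin t → Submodule R M) {x : M} (h : x ∈ ⨆ i, I i) :
    ∃ e : Fin t → M, (∀ i, e i ∈ I i) ∧ ∑ i, e i = x := by
  classical
  refine Submodule.iSup_induction (motive := fun x => ∃ e : Fin t → M, (∀ i, e i ∈ I i) ∧ ∑ i, e i = x)
    I h ?_ ?_ ?_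
  · intro i y hy
    refine ⟨Pi.single i y, fun j => ?_, by simp⟩
    by_cases hji : j = i
    · subst hji; simpa using hy
    · simp [Pi.single_eq_of_ne hji]
  · exact ⟨0, fun j => Submodule.zero_mem _, by simp⟩
  · rintro y z ⟨e, he, rfl⟩ ⟨e', he', rfl⟩
    exact ⟨e + e', fun j => Submodule.add_mem _ (he j) (he' j), by
      rw [← Finset.sum_add_distrib]; rfl⟩

variable {R : Type} [CommRing R] [IsNoetherianRing R]
  {A : Type} [AddCommGroup A] [Module R A] [IsArtinian R A]

lemma ann_span_singleton_eq (a : A) : (R ∙ a).annihilator = Ideal.torsionOf R A a := by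
  ext r
  rw [Submodule.mem_annihilator_span_singleton, Ideal.mem_torsionOf_iff]

/-- any prime containing the annihilator of an element of an Artinian module is maximal
and lies in the support. -/
lemma prime_over_torsionOf {a : A} {p : Ideal R} (hp : p.IsPrime)
    (hle : Ideal.torsionOf R A a ≤ p) :
    p.IsMaximal ∧ (⟨p, hp⟩ : PrimeSpectrum R) ∈ Module.support R A := by
  set J := Ideal.torsionOf R A a with hJ
  have hart : IsArtinian R (R ⧸ J) :=
    isArtinian_of_linearEquiv (Ideal.quotTorsionOfEquivSpanSingleton R A a).symm
  haveI : IsArtinianRing (R ⧸ J) := isArtinian_of_tower R hart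
  have hker : RingHom.ker (Ideal.Quotient.mk J) ≤ p := by
    rw [Ideal.mk_ker]; exact hle
  haveI hp' : (p.map (Ideal.Quotient.mk J)).IsPrime :=
    Ideal.map_isPrime_of_surjective Ideal.Quotient.mk_surjective hker
  haveI hmax' : (p.map (Ideal.Quotient.mk J)).IsMaximal :=
    IsArtinianRing.isMaximal_of_isPrime _
  have hcomap : p = (p.map (Ideal.Quotient.mk J)).comap (Ideal.Quotient.mk J) := by
    rw [Ideal.comap_map_of_surjective (Ideal.Quotient.mk J) Ideal.Quotient.mk_surjective p]
    have hb : Ideal.comap (Ideal.Quotient.mk J) ⊥ ≤ p := by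
      have hcb : Ideal.comap (Ideal.Quotient.mk J) ⊥ = J := by
        ext x
        rw [Ideal.mem_comap, Ideal.mem_bot, Ideal.Quotient.eq_zero_iff_mem]
      rw [hcb]; exact hle
    exact (sup_eq_left.mpr hb).symm
  refine ⟨?_, ?_⟩
  · exact hcomap ▸ Ideal.comap_isMaximal_of_surjective _ Ideal.Quotient.mk_surjective
  · exact Module.mem_support_iff_exists_annihilator.mpr
      ⟨a, by rw [ann_span_singleton_eq]; exact hle⟩

variable {t : ℕ} {m : Fin t → PrimeSpectrum R}

lemma m_isMaximal (hrange : Module.support R A = Set.range m) (i : Fin t) :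
    (m i).asIdeal.IsMaximal := by
  have hmem : m i ∈ Module.support R A := hrange ▸ Set.mem_range_self i
  obtain ⟨a, ha⟩ := Module.mem_support_iff_exists_annihilator.mp hmem
  rw [ann_span_singleton_eq] at ha
  exact (prime_over_torsionOf (m i).isPrime ha).1

lemma prime_eq_m (hrange : Module.support R A = Set.range m) {p : Ideal R} (hp : p.IsPrime)
    {a : A} (hle : Ideal.torsionOf R A a ≤ p) : ∃ i, (m i).asIdeal = p := by
  have hsupp := (prime_over_torsionOf hp hle).2
  rw [hrange] at hsupp
  obtain ⟨i, hi⟩ := hsupp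
  exact ⟨i, congrArg PrimeSpectrum.asIdeal hi⟩

lemma decomp (hminj : Function.Injective m) (hrange : Module.support R A = Set.range m)
    (a : A) : ∃ (nn : ℕ) (y : Fin t → A), a = ∑ i, y i ∧
      ∀ i, (m i).asIdeal ^ nn ≤ Ideal.torsionOf R A (y i) := by
  classical
  set J := Ideal.torsionOf R A a with hJ
  by_cases hJtop : J = ⊤
  · refine ⟨1, 0, ?_, fun i => by simp⟩
    have h1 : (1:R) ∈ J := hJtop ▸ Submodule.mem_top
    rw [Ideal.mem_torsionOf_iff, one_smul] at h1
    simp [h1]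
  set s : Finset (Fin t) := Finset.univ.filter (fun i => J ≤ (m i).asIdeal) with hs
  have hprime_mem : ∀ p : Ideal R, p.IsPrime → J ≤ p → ∃ i ∈ s, (m i).asIdeal = p := by
    intro p hp hle
    obtain ⟨i, hi⟩ := prime_eq_m hrange hp hle
    exact ⟨i, Finset.mem_filter.mpr ⟨Finset.mem_univ i, hi ▸ hle⟩, hi⟩
  have hsne : s.Nonempty := by
    obtain ⟨p, hpmax, hlep⟩ := Ideal.exists_le_maximal J hJtop
    obtain ⟨i, his, _⟩ := hprime_mem p hpmax.isPrime hlep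
    exact ⟨i, his⟩
  have hradle : s.prod (fun i => (m i).asIdeal) ≤ J.radical := by
    rw [Ideal.radical_eq_sInf]
    refine le_sInf ?_
    rintro q ⟨hq1, hq2⟩
    obtain ⟨i, his, hieq⟩ := hprime_mem q hq2 hq1
    exact le_trans Ideal.prod_le_inf (le_trans (Finset.inf_le his) (le_of_eq hieq))
  obtain ⟨nn, hnn⟩ := Ideal.exists_pow_le_of_le_radical_of_fg hradle (IsNoetherian.noetherian _)
  have hprodle : s.prod (fun i => (m i).asIdeal ^ nn) ≤ J := by
    rw [Finset.prod_pow]; exact hnn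
  set I : Fin t → Ideal R :=
    fun i => if i ∈ s then (s.erase i).prod (fun j => (m j).asIdeal ^ nn) else ⊥ with hI
  have hsup : ⨆ i, I i = ⊤ := by
    by_contra hne
    obtain ⟨Mx, hMmax, hMle⟩ := Ideal.exists_le_maximal _ hne
    have key : ∀ i ∈ s, ∃ j ∈ s.erase i, (m j).asIdeal ≤ Mx := by
      intro i hi
      have hle' : (s.erase i).prod (fun j => (m j).asIdeal ^ nn) ≤ Mx := by
        have := le_trans (le_iSup I i) hMle
        simp only [hI, if_pos hi] at this
        exact this
      obtain ⟨j, hj, hjle⟩ := (hMmax.isPrime.prod_le).mp hle'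
      exact ⟨j, hj, Ideal.IsPrime.le_of_pow_le hjle⟩
    obtain ⟨i0, hi0⟩ := hsne
    obtain ⟨j, hjmem, hjle⟩ := key i0 hi0
    have hjeq : (m j).asIdeal = Mx := (m_isMaximal hrange j).eq_of_le hMmax.ne_top hjle
    obtain ⟨j', hj'mem, hj'le⟩ := key j (Finset.mem_of_mem_erase hjmem)
    have hj'eq : (m j').asIdeal = Mx := (m_isMaximal hrange j').eq_of_le hMmax.ne_top hj'le
    have : j' = j := hminj (PrimeSpectrum.ext (hj'eq.trans hjeq.symm))
    exact (Finset.mem_erase.mp hj'mem).1 this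
  obtain ⟨e, he, hesum⟩ := exists_sum_of_iSup_eq_top I
    (show (1:R) ∈ ⨆ i, I i by rw [hsup]; exact Submodule.mem_top)
  refine ⟨nn, fun i => e i • a, ?_, ?_⟩
  · calc a = (1:R) • a := (one_smul R a).symm
      _ = (∑ i, e i) • a := by rw [hesum]
      _ = ∑ i, e i • a := Finset.sum_smul
  · intro i
    by_cases his : i ∈ s
    · intro r hr
      have hei : e i ∈ (s.erase i).prod (fun j => (m j).asIdeal ^ nn) := by
        have := he i
        simp only [hI, if_pos his] at this
        exact this
      have hmul : r * e i ∈ J := by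
        apply hprodle
        have hmm := Ideal.mul_mem_mul hr hei
        rwa [Finset.mul_prod_erase s (fun j => (m j).asIdeal ^ nn) his] at hmm
      rw [Ideal.mem_torsionOf_iff, smul_smul]
      exact (Ideal.mem_torsionOf_iff a (r * e i)).mp hmul
    · have he0 : e i = 0 := by
        have := he i
        simp only [hI, if_neg his, Submodule.mem_bot] at this
        exact this
      simp [he0]

end Decomp


section Loc
variable {R : Type} [CommRing R] [IsNoetherianRing R]
  {A : Type} [AddCommGroup A] [Module R A] [IsArtinian R A]
  {t : ℕ} {m : Fin t → PrimeSpectrum R}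

/-- distinct maximal ideals: find an element separating them. -/
lemma exists_sep (hminj : Function.Injective m)
    (hrange : Module.support R A = Set.range m) {i j : Fin t} (hij : i ≠ j) :
    ∃ r : R, r ∈ (m i).asIdeal ∧ r ∉ (m j).asIdeal := by
  by_contra h
  push_neg at h
  have hle : (m i).asIdeal ≤ (m j).asIdeal := h
  have heq : (m i).asIdeal = (m j).asIdeal :=
    (m_isMaximal hrange i).eq_of_le (m_isMaximal hrange j).ne_top hle
  exact hij (hminj (PrimeSpectrum.ext heq))

/-- a power-torsion element localizes to zero at the other maximal ideals. -/
lemma mk_eq_zero_of_torsion (hminj : Function.Injective m)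
    (hrange : Module.support R A = Set.range m) {i j : Fin t} (hij : j ≠ i) {a : A} {nn : ℕ}
    (htor : (m i).asIdeal ^ nn ≤ Ideal.torsionOf R A a)
    (sden : (m j).asIdeal.primeCompl) :
    (LocalizedModule.mk a sden : LocalizedModule (m j).asIdeal.primeCompl A) = 0 := by
  obtain ⟨r, hri, hrj⟩ := exists_sep hminj hrange (Ne.symm hij)
  have hkill : r ^ nn • a = 0 := by
    have := htor (Ideal.pow_mem_pow hri nn)
    rwa [Ideal.mem_torsionOf_iff] at this
  have hu : r ^ nn ∈ (m j).asIdeal.primeCompl := pow_mem hrj nn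
  rw [show (0 : LocalizedModule (m j).asIdeal.primeCompl A) = LocalizedModule.mk 0 1 from
    (LocalizedModule.zero_mk 1).symm, LocalizedModule.mk_eq]
  refine ⟨⟨r ^ nn, hu⟩, ?_⟩
  show (⟨r ^ nn, hu⟩ : (m j).asIdeal.primeCompl) • (1 : (m j).asIdeal.primeCompl) • a =
    (⟨r ^ nn, hu⟩ : (m j).asIdeal.primeCompl) • sden • (0 : A)
  rw [one_smul, smul_zero, smul_zero, Submonoid.smul_def, hkill]

/-- clearing the denominator at the distinguished maximal ideal. -/
lemma mk_eq_mk_smul (hrange : Module.support R A = Set.range m) {i : Fin t} {a : A} {nn : ℕ}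
    (htor : (m i).asIdeal ^ nn ≤ Ideal.torsionOf R A a)
    (sden : (m i).asIdeal.primeCompl) :
    ∃ c : R, (LocalizedModule.mk a sden : LocalizedModule (m i).asIdeal.primeCompl A) =
      LocalizedModule.mk (c • a) 1 := by
  have hsup : Ideal.span {(sden : R)} ⊔ (m i).asIdeal ^ nn = ⊤ := by
    by_contra hne
    obtain ⟨Mx, hMmax, hMle⟩ := Ideal.exists_le_maximal _ hne
    have h1 : (m i).asIdeal ≤ Mx := Ideal.IsPrime.le_of_pow_le (le_trans le_sup_right hMle)
    have heq : (m i).asIdeal = Mx := (m_isMaximal hrange i).eq_of_le hMmax.ne_top h1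
    have h2 : (sden : R) ∈ Mx :=
      le_trans le_sup_left hMle (Ideal.mem_span_singleton_self _)
    exact sden.2 (heq ▸ h2)
  have h1 : (1 : R) ∈ Ideal.span {(sden : R)} ⊔ (m i).asIdeal ^ nn := hsup ▸ Submodule.mem_top
  obtain ⟨x, hx, w, hw, hxw⟩ := Submodule.mem_sup.mp h1
  obtain ⟨c, hc⟩ := Ideal.mem_span_singleton'.mp hx
  refine ⟨c, ?_⟩
  rw [LocalizedModule.mk_eq]
  refine ⟨1, ?_⟩
  show (1 : (m i).asIdeal.primeCompl) • (1 : (m i).asIdeal.primeCompl) • a =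
    (1 : (m i).asIdeal.primeCompl) • sden • (c • a)
  rw [one_smul, one_smul, one_smul, Submonoid.smul_def, smul_smul]
  have hwa : w • a = 0 := by
    have := htor hw
    rwa [Ideal.mem_torsionOf_iff] at this
  calc a = ((c * (sden : R)) + w) • a := by rw [hc, hxw, one_smul]
    _ = (c * (sden : R)) • a + w • a := add_smul _ _ _
    _ = ((sden : R) * c) • a := by rw [hwa, add_zero, mul_comm]

lemma torsionOf_smul_le {a : A} (c : R) :
    Ideal.torsionOf R A a ≤ Ideal.torsionOf R A (c • a) := by
  intro r hr
  rw [Ideal.mem_torsionOf_iff] at hr ⊢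
  rw [smul_comm, hr, smul_zero]

/-- surjectivity of the localization map at each supported maximal ideal,
with power-torsion preimage. -/
lemma comp_surj (hminj : Function.Injective m) (hrange : Module.support R A = Set.range m)
    (i : Fin t) (z : LocalizedModule (m i).asIdeal.primeCompl A) :
    ∃ a : A, (∃ nn, (m i).asIdeal ^ nn ≤ Ideal.torsionOf R A a) ∧
      LocalizedModule.mk a 1 = z := by
  induction z using LocalizedModule.induction_on with
  | h x sden =>
  obtain ⟨nn, y, hxy, htor⟩ := decomp hminj hrange x
  have hyi : (LocalizedModule.mk x sden : LocalizedModule (m i).asIdeal.primeCompl A) =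
      LocalizedModule.mk (y i) sden := by
    have : (LocalizedModule.mk x sden : LocalizedModule (m i).asIdeal.primeCompl A) =
        ∑ j, LocalizedModule.mk (y j) sden := by
      rw [hxy]
      induction (Finset.univ : Finset (Fin t)) using Finset.induction with
      | empty => simp
      | insert _ _ hni ih =>
        rw [Finset.sum_insert hni, Finset.sum_insert hni, ← ih, LocalizedModule.mk_add_mk,
          ← smul_add, LocalizedModule.mk_cancel_common_left]
    rw [this, Finset.sum_eq_single i
      (fun j _ hji => mk_eq_zero_of_torsion hminj hrange (by
        intro hj; exact hji (by ext <;> simp_all) ) (htor j) sden) (by simp)]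
  obtain ⟨c, hc⟩ := mk_eq_mk_smul hrange (htor i) sden
  exact ⟨c • y i, ⟨nn, le_trans (htor i) (torsionOf_smul_le c)⟩, by rw [hyi, hc]⟩

end Loc


section Loc2
variable {R : Type} [CommRing R] [IsNoetherianRing R]
  {A : Type} [AddCommGroup A] [Module R A] [IsArtinian R A]
  {t : ℕ} {m : Fin t → PrimeSpectrum R}

lemma psi_bijective (hminj : Function.Injective m)
    (hrange : Module.support R A = Set.range m) :
    Function.Bijective
      (LinearMap.pi fun i : Fin t => LocalizedModule.mkLinearMap (m i).asIdeal.primeCompl A) := by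
  constructor
  · rw [injective_iff_map_eq_zero]
    intro a ha
    by_contra hne
    have hJtop : Ideal.torsionOf R A a ≠ ⊤ := by
      intro h
      have h1 : (1:R) ∈ Ideal.torsionOf R A a := h ▸ Submodule.mem_top
      rw [Ideal.mem_torsionOf_iff, one_smul] at h1
      exact hne h1
    obtain ⟨p, hpmax, hlep⟩ := Ideal.exists_le_maximal _ hJtop
    obtain ⟨i, hieq⟩ := prime_eq_m hrange hpmax.isPrime hlep
    have hi0 : LocalizedModule.mkLinearMap (m i).asIdeal.primeCompl A a = 0 := by
      have := congrFun ha i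
      simpa [LinearMap.pi_apply] using this
    have hi : (LocalizedModule.mk a 1 : LocalizedModule (m i).asIdeal.primeCompl A) =
        LocalizedModule.mk 0 1 := by
      rw [LocalizedModule.zero_mk]
      rw [LocalizedModule.mkLinearMap_apply] at hi0
      exact hi0
    obtain ⟨u, hu⟩ := LocalizedModule.mk_eq.mp hi
    have hu0 : (u : R) • a = 0 := by
      simpa [Submonoid.smul_def] using hu
    have hlei : Ideal.torsionOf R A a ≤ (m i).asIdeal := by rw [hieq]; exact hlep
    exact u.2 (hlei ((Ideal.mem_torsionOf_iff a (u : R)).mpr hu0))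
  · intro z
    have := fun i => comp_surj hminj hrange i (z i)
    choose a htor hmk using this
    refine ⟨∑ i, a i, ?_⟩
    funext j
    rw [LinearMap.pi_apply]
    have hsum : (LocalizedModule.mkLinearMap (m j).asIdeal.primeCompl A) (∑ i, a i) =
        ∑ i, LocalizedModule.mk (a i) 1 := by
      rw [map_sum]
      exact Finset.sum_congr rfl fun i _ => LocalizedModule.mkLinearMap_apply _ _ _
    rw [hsum, Finset.sum_eq_single j ?_ (by simp)]
    · exact hmk j
    · intro i _ hij
      obtain ⟨nn, htn⟩ := htor i
      exact mk_eq_zero_of_torsion hminj hrange (Ne.symm hij) htn 1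

lemma descend (i : Fin t) :
    ∀ (n : ℕ) (y : A), y ≠ 0 → (m i).asIdeal ^ n ≤ Ideal.torsionOf R A y →
      ∃ z : A, z ≠ 0 ∧ (m i).asIdeal ≤ Ideal.torsionOf R A z := by
  intro n
  induction n with
  | zero =>
    intro y hy h
    exfalso
    apply hy
    have h1 : (1:R) ∈ Ideal.torsionOf R A y := h (by rw [pow_zero, Ideal.one_eq_top]; trivial)
    rwa [Ideal.mem_torsionOf_iff, one_smul] at h1
  | succ k ih =>
    intro y hy h
    by_cases hcase : (m i).asIdeal ≤ Ideal.torsionOf R A y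
    · exact ⟨y, hy, hcase⟩
    · obtain ⟨rr, hrm, hrt⟩ := SetLike.not_le_iff_exists.mp hcase
      refine ih (rr • y) ?_ ?_
      · intro h0
        exact hrt ((Ideal.mem_torsionOf_iff y rr).mpr h0)
      · intro cc hcc
        rw [Ideal.mem_torsionOf_iff, smul_smul]
        have : cc * rr ∈ (m i).asIdeal ^ (k + 1) := by
          rw [pow_succ]
          exact Ideal.mul_mem_mul hcc hrm
        exact (Ideal.mem_torsionOf_iff y (cc * rr)).mp (h this)

lemma m_isAssociated (hminj : Function.Injective m)
    (hrange : Module.support R A = Set.range m) (i : Fin t) :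
    IsAssociatedPrime (m i).asIdeal A := by
  classical
  have hmem : m i ∈ Module.support R A := hrange ▸ Set.mem_range_self i
  obtain ⟨a, ha⟩ := Module.mem_support_iff_exists_annihilator.mp hmem
  rw [ann_span_singleton_eq] at ha
  obtain ⟨nn, y, hxy, htor⟩ := decomp hminj hrange a
  -- y i ≠ 0
  have hex : ∀ j : Fin t, ∃ rr : R, j ≠ i → (rr ∈ (m j).asIdeal ∧ rr ∉ (m i).asIdeal) := by
    intro j
    by_cases hj : j = i
    · exact ⟨0, fun h => absurd hj h⟩
    · obtain ⟨rr, h1, h2⟩ := exists_sep hminj hrange hj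
      exact ⟨rr, fun _ => ⟨h1, h2⟩⟩
  choose r hrp using hex
  have hyi : y i ≠ 0 := by
    intro hyi0
    set c : R := (Finset.univ.erase i).prod (fun j => r j ^ nn) with hc
    have hkill : ∀ j ∈ Finset.univ.erase i, c • y j = 0 := by
      intro j hj
      have hmemt : c ∈ Ideal.torsionOf R A (y j) := by
        have h1 : r j ^ nn ∈ Ideal.torsionOf R A (y j) := by
          apply htor j
          exact Ideal.pow_mem_pow ((hrp j (Finset.mem_erase.mp hj).1).1) nn
        have : c = r j ^ nn * ((Finset.univ.erase i).erase j).prod (fun k => r k ^ nn) := by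
          rw [hc]
          exact (Finset.mul_prod_erase _ _ hj).symm
        rw [this]
        exact Ideal.mul_mem_right _ _ h1
      rwa [Ideal.mem_torsionOf_iff] at hmemt
    have hca : c • a = 0 := by
      rw [hxy, Finset.smul_sum]
      refine Finset.sum_eq_zero fun j _ => ?_
      by_cases hji : j = i
      · rw [hji, hyi0, smul_zero]
      · exact hkill j (Finset.mem_erase.mpr ⟨hji, Finset.mem_univ j⟩)
    have hcm : c ∈ (m i).asIdeal := ha ((Ideal.mem_torsionOf_iff a c).mpr hca)
    haveI := (m i).isPrime
    obtain ⟨j, hj, hjm⟩ := Ideal.IsPrime.prod_mem_iff.mp hcm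
    exact (hrp j (Finset.mem_erase.mp hj).1).2 ((m i).isPrime.mem_of_pow_mem nn hjm)
  obtain ⟨z, hz, hzle⟩ := descend i nn (y i) hyi (htor i)
  have hzt : Ideal.torsionOf R A z ≠ ⊤ := by
    intro h
    apply hz
    have h1 : (1:R) ∈ Ideal.torsionOf R A z := h ▸ Submodule.mem_top
    rwa [Ideal.mem_torsionOf_iff, one_smul] at h1
  have heq : (m i).asIdeal = Ideal.torsionOf R A z :=
    (m_isMaximal hrange i).eq_of_le hzt hzle
  have hcol : (⊥ : Submodule R A).colon {z} = Ideal.torsionOf R A z := by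
    ext r; rw [Submodule.mem_colon_singleton, Submodule.mem_bot, Ideal.mem_torsionOf_iff]
  exact ⟨(m i).isPrime, z, by rw [hcol, ← heq, (m i).isPrime.radical]⟩

lemma supp_eq_ass (hminj : Function.Injective m)
    (hrange : Module.support R A = Set.range m) :
    (fun p : PrimeSpectrum R => p.asIdeal) '' Module.support R A = associatedPrimes R A := by
  apply Set.Subset.antisymm
  · rintro p ⟨q, hq, rfl⟩
    rw [hrange] at hq
    obtain ⟨i, rfl⟩ := hq
    exact m_isAssociated hminj hrange i
  · rintro p hp
    obtain ⟨hprime, z, hz⟩ := hp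
    have hz0 : z ≠ 0 := by
      rintro rfl
      apply hprime.ne_top
      rw [hz, Submodule.colon_singleton_zero, Ideal.radical_top]
    refine ⟨⟨p, hprime⟩, ?_, rfl⟩
    exact Module.mem_support_iff_exists_annihilator.mpr ⟨z, by
      intro r hr
      rw [ann_span_singleton_eq] at hr
      show r ∈ p
      rw [hz]
      exact Ideal.le_radical (by
        rwa [Submodule.mem_colon_singleton, Submodule.mem_bot, ← Ideal.mem_torsionOf_iff])⟩

end Loc2


section Att
variable {R : Type} [CommRing R] [IsNoetherianRing R]
  {A : Type} [AddCommGroup A] [Module R A] [IsArtinian R A]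
  {t : ℕ} {m : Fin t → PrimeSpectrum R}

lemma att_union (hminj : Function.Injective m)
    (hrange : Module.support R A = Set.range m) :
    AttachedPrimes R A =
      ⋃ i : Fin t, AttachedPrimes R (LocalizedModule (m i).asIdeal.primeCompl A) := by
  classical
  have hbij := psi_bijective hminj hrange
  set ψ := LinearMap.pi fun i : Fin t =>
    LocalizedModule.mkLinearMap (m i).asIdeal.primeCompl A with hψ
  let e : A ≃ₗ[R] (∀ i : Fin t, LocalizedModule (m i).asIdeal.primeCompl A) :=
    LinearEquiv.ofBijective ψ hbij
  have hgsurj : ∀ i, Function.Surjective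
      (LocalizedModule.mkLinearMap (m i).asIdeal.primeCompl A) := by
    intro i z
    obtain ⟨a, _, hmk⟩ := comp_surj hminj hrange i z
    exact ⟨a, by rw [LocalizedModule.mkLinearMap_apply]; exact hmk⟩
  apply Set.Subset.antisymm
  · intro p hp
    rw [attachedPrimes_eq_QSet] at hp
    obtain ⟨K, hsec, hrad⟩ := hp
    have hpprime : p.IsPrime := hrad ▸ hsec.radical_prime
    set f : (∀ i : Fin t, LocalizedModule (m i).asIdeal.primeCompl A) →ₗ[R] (A ⧸ K) :=
      K.mkQ.comp (e.symm : _ →ₗ[R] A) with hf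
    have hfsurj : Function.Surjective f := (Submodule.mkQ_surjective K).comp e.symm.surjective
    have hreps : ∀ i, ∃ (n : ℕ)
        (S : Fin n → Submodule R (LocalizedModule (m i).asIdeal.primeCompl A)),
        IsMinimalRep R S := by
      intro i
      haveI := isArtinian_of_surjective A _ (hgsurj i)
      exact exists_minimalRep
    choose nr Sr hSr using hreps
    set U : (Σ i : Fin t, Fin (nr i)) → Submodule R (A ⧸ K) := fun σ =>
      (Sr σ.1 σ.2).map (f.comp
        (LinearMap.single R (fun i => LocalizedModule (m i).asIdeal.primeCompl A) σ.1)) with hU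
    have hUsup : ⨆ σ, U σ = ⊤ := by
      rw [iSup_sigma]
      have h1 : ∀ i : Fin t, (⨆ k, U ⟨i, k⟩) =
          (LinearMap.range (LinearMap.single R
            (fun i => LocalizedModule (m i).asIdeal.primeCompl A) i)).map f := by
        intro i
        calc (⨆ k, U ⟨i, k⟩)
            = (⨆ k, (Sr i k).map (LinearMap.single R
                (fun i => LocalizedModule (m i).asIdeal.primeCompl A) i)).map f := by
              rw [Submodule.map_iSup]
              refine iSup_congr fun k => ?_
              simp only [hU]
              rw [Submodule.map_comp]
          _ = ((⊤ : Submodule R (LocalizedModule (m i).asIdeal.primeCompl A)).map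
                (LinearMap.single R
                (fun i => LocalizedModule (m i).asIdeal.primeCompl A) i)).map f := by
              rw [← Submodule.map_iSup, (hSr i).2.1]
          _ = (LinearMap.range (LinearMap.single R
                (fun i => LocalizedModule (m i).asIdeal.primeCompl A) i)).map f := by
              rw [Submodule.map_top]
      calc ⨆ i, ⨆ k, U ⟨i, k⟩
          = (⨆ i, LinearMap.range (LinearMap.single R
              (fun i => LocalizedModule (m i).asIdeal.primeCompl A) i)).map f := by
            rw [Submodule.map_iSup]
            exact iSup_congr h1
        _ = (⊤ : Submodule R (∀ i : Fin t,
              LocalizedModule (m i).asIdeal.primeCompl A)).map f := by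
            rw [LinearMap.iSup_range_single]
        _ = ⊤ := by
            rw [Submodule.map_top, LinearMap.range_eq_top]
            exact hfsurj
    obtain ⟨σ, hσ⟩ := prime_pigeonhole U hUsup hpprime hrad
    have hne : U σ ≠ ⊥ := fun h =>
      hpprime.ne_top (by rw [← hσ, h, Submodule.annihilator_bot, Ideal.radical_top])
    obtain ⟨_, h2⟩ := ((hSr σ.1).1 σ.2).map (f.comp
      (LinearMap.single R (fun i => LocalizedModule (m i).asIdeal.primeCompl A) σ.1)) hne
    refine Set.mem_iUnion.mpr ⟨σ.1, ?_⟩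
    exact ⟨nr σ.1, Sr σ.1, hSr σ.1, σ.2, by rw [← h2]; exact hσ.symm⟩
  · intro p hp
    obtain ⟨si, hsi⟩ := Set.mem_iUnion.mp hp
    haveI := isArtinian_of_surjective A _ (hgsurj si)
    rw [attachedPrimes_eq_QSet] at hsi
    have hQ := QSet_subset_of_surjective _ (hgsurj si) hsi
    rw [attachedPrimes_eq_QSet]
    exact hQ

end Att

/-- For an Artinian module `A` over a Noetherian commutative ring `R`,
`Supp_R A = Ass_R A` is a finite set of maximal ideals; if `Supp_R A = {m_1, …, m_t}` then the
natural map `ψ : A → ⊕ᵢ A_{m_i}` is an isomorphism and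
`Att_R A = ⋃ᵢ Att_R (A_{m_i})`. -/
theorem stmt_1 (R : Type) [CommRing R] [IsNoetherianRing R]
    (A : Type) [AddCommGroup A] [Module R A] [IsArtinian R A]
    (t : ℕ) (m : Fin t → PrimeSpectrum R) (hminj : Function.Injective m)
    (hrange : Module.support R A = Set.range m) :
    ((fun p : PrimeSpectrum R => p.asIdeal) '' Module.support R A = associatedPrimes R A) ∧
    (Module.support R A).Finite ∧
    (∀ p ∈ Module.support R A, p.asIdeal.IsMaximal) ∧
    Function.Bijective
      (LinearMap.pi fun i : Fin t => LocalizedModule.mkLinearMap (m i).asIdeal.primeCompl A) ∧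
    AttachedPrimes R A =
      ⋃ i : Fin t, AttachedPrimes R (LocalizedModule (m i).asIdeal.primeCompl A) := by
  refine ⟨supp_eq_ass hminj hrange, ?_, ?_, psi_bijective hminj hrange,
    att_union hminj hrange⟩
  · rw [hrange]; exact Set.finite_range m
  · intro p hp
    rw [hrange] at hp
    obtain ⟨i, rfl⟩ := hp
    exact m_isMaximal hrange i
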